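/- Let q be a positive integer divisible by 4, and consider the assignment problem with couples with two hospitals H = {h, h'}; single interns s₁,…,s_{q/2+1} whose M-rows equal 1 at h and 0 at h'; single interns s'₁,…,s'_{q/2+1} whose M-rows equal 0 at h and 1 at h'; one couple c* whose members' M-rows equal 1/2 at h and 1/2 at h'; couples c₁,…,c_{q/4−1} whose members' M-rows equal 1 at h and 0 at h'; and couples c'₁,…,c'_{q/4−1} whose members' M-rows equal 0 at h and 1 at h' (so both hospitals have capacity q and there are q/2 − 1 couples in total). Then in every deterministic assignment matrix M' for this problem, at least one of the two hospitals is assigned at least q/4 couples; consequently, for that hospital h* there exists at least one single intern i with M_{i,h*} = 1 but M'_{i,h*} = 0. -/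

import Mathlib

open Finset

/-- `(S, C, H, M)` (with `I`, `H` types of interns and hospitals) is an assignment problem
with couples: `S` is the set of single interns, `C` the set of couples (ordered pairs of
members), every intern is a single or a member of a couple, members of couples are distinct
from each other, from the singles, and from members of other couples, `M ∈ [0,1]^{I×H}`,
each row of `M` sums to `1`, and both members of a couple have identical rows. -/
def IsCouplesProblem {I H : Type*} [Fintype I] [Fintype H]
    (S : Finset I) (C : Finset (I × I)) (M : I → H → ℝ) : Prop :=
  (∀ i : I, i ∈ S ∨ ∃ c ∈ C, i = c.1 ∨ i = c.2) ∧
  (∀ c ∈ C, c.1 ∉ S ∧ c.2 ∉ S ∧ c.1 ≠ c.2) ∧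
  (∀ c ∈ C, ∀ c' ∈ C, c ≠ c' →
    c.1 ≠ c'.1 ∧ c.1 ≠ c'.2 ∧ c.2 ≠ c'.1 ∧ c.2 ≠ c'.2) ∧
  (∀ (i : I) (h : H), 0 ≤ M i h ∧ M i h ≤ 1) ∧
  (∀ i : I, ∑ h : H, M i h = 1) ∧
  (∀ c ∈ C, ∀ h : H, M c.1 h = M c.2 h)

/-- `M'` is a deterministic assignment matrix with respect to the problem with couples `C`
and target matrix `M`: its entries are in `{0,1}`, rows sum to `1`, both members of each
couple have identical rows, and each column sum equals the capacity `q_h = ∑ i, M i h`. -/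
def IsDeterministicAssignment {I H : Type*} [Fintype I] [Fintype H]
    (C : Finset (I × I)) (M M' : I → H → ℝ) : Prop :=
  (∀ (i : I) (h : H), M' i h = 0 ∨ M' i h = 1) ∧
  (∀ i : I, ∑ h : H, M' i h = 1) ∧
  (∀ c ∈ C, ∀ h : H, M' c.1 h = M' c.2 h) ∧
  (∀ h : H, ∑ i : I, M' i h = ∑ i : I, M i h)


/-- Interns in the lower-bound example: singles `s₁, …, s_{q/2+1}` and
`s'₁, …, s'_{q/2+1}`, the couple `c*` (two members indexed by `Bool`), and couples
`c₁, …, c_{q/4−1}` and `c'₁, …, c'_{q/4−1}` (each with two members indexed by `Bool`). -/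
inductive ExIntern (q : ℕ) where
  | s (j : Fin (q / 2 + 1))
  | s' (j : Fin (q / 2 + 1))
  | cstar (b : Bool)
  | c (j : Fin (q / 4 - 1)) (b : Bool)
  | c' (j : Fin (q / 4 - 1)) (b : Bool)
  deriving DecidableEq, Fintype

/-- The target matrix of the example: hospitals are `Bool`, with `true` being `h` and
`false` being `h'`.  The `s`-singles and `c`-couples demand `h` with probability 1, the
`s'`-singles and `c'`-couples demand `h'` with probability 1, and the couple `c*` demands
each hospital with probability `1/2`. -/
noncomputable def exM (q : ℕ) : ExIntern q → Bool → ℝ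
  | .s _, b => if b then 1 else 0
  | .s' _, b => if b then 0 else 1
  | .cstar _, _ => 1 / 2
  | .c _ _, b => if b then 1 else 0
  | .c' _ _, b => if b then 0 else 1

/-- The set of single interns of the example. -/
def exS (q : ℕ) : Finset (ExIntern q) :=
  (Finset.univ.image ExIntern.s) ∪ (Finset.univ.image ExIntern.s')

/-- The set of couples of the example. -/
def exC (q : ℕ) : Finset (ExIntern q × ExIntern q) :=
  {(ExIntern.cstar false, ExIntern.cstar true)} ∪
    (Finset.univ.image fun j => (ExIntern.c j false, ExIntern.c j true)) ∪
    (Finset.univ.image fun j => (ExIntern.c' j false, ExIntern.c' j true))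

/-! Each couple is placed at exactly one of the two hospitals, so one of them, `h*`, receives at
least half of the couples: for `q = 4k`, at least `k` of the `2k - 1` couples, that is `2k`
interns. The capacity `4k` of `h*` then leaves room for at most `2k` of the `2k + 1` singles
demanding `h*`. -/

section DeterministicAssignment

variable {I H : Type*} {C : Finset (I × I)}

noncomputable def assignedCouples (C : Finset (I × I)) (M' : I → H → ℝ) (h : H) :
    Finset (I × I) :=
  C.filter fun c => M' c.1 h = 1 ∧ M' c.2 h = 1

theorem assignedCouples_subset (M' : I → H → ℝ) (h : H) : assignedCouples C M' h ⊆ C :=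
  Finset.filter_subset _ _

variable [Fintype I] [Fintype H]

theorem IsDeterministicAssignment.card_le_capacity {M M' : I → H → ℝ}
    (hM' : IsDeterministicAssignment C M M') {h : H} {T : Finset I}
    (hT : ∀ i ∈ T, M' i h = 1) : (T.card : ℝ) ≤ ∑ i, M i h := by
  have hnonneg : ∀ i, 0 ≤ M' i h := fun i => by rcases hM'.1 i h with hi | hi <;> simp [hi]
  calc (T.card : ℝ) = ∑ i ∈ T, M' i h := by simp [Finset.sum_congr rfl hT]
    _ ≤ ∑ i, M' i h := Finset.sum_le_sum_of_subset_of_nonneg (Finset.subset_univ T)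
        fun i _ _ => hnonneg i
    _ = ∑ i, M i h := hM'.2.2.2 h

variable {M M' : I → Bool → ℝ}

theorem IsDeterministicAssignment.mem_assignedCouples_false_iff
    (hM' : IsDeterministicAssignment C M M') {c : I × I} (hc : c ∈ C) :
    c ∈ assignedCouples C M' false ↔ c ∉ assignedCouples C M' true := by
  have hrow : M' c.1 true + M' c.1 false = 1 := by simpa using hM'.2.1 c.1
  simp only [assignedCouples, Finset.mem_filter, hc, true_and, ← hM'.2.2.1 c hc, and_self]
  rcases hM'.1 c.1 true with h | h <;> rw [h] at hrow ⊢ <;> norm_num <;> linarith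

theorem IsDeterministicAssignment.card_assignedCouples_add
    (hM' : IsDeterministicAssignment C M M') :
    (assignedCouples C M' true).card + (assignedCouples C M' false).card = C.card := by
  classical
  have hfalse : assignedCouples C M' false = C \ assignedCouples C M' true := by
    ext c
    by_cases hc : c ∈ C
    · simp [hM'.mem_assignedCouples_false_iff hc, hc]
    · simp [assignedCouples, hc]
  rw [hfalse, add_comm]
  exact Finset.card_sdiff_add_card_eq_card (assignedCouples_subset _ _)

theorem IsDeterministicAssignment.exists_card_le_two_mul_card_assignedCouples
    (hM' : IsDeterministicAssignment C M M') :
    ∃ h, C.card ≤ 2 * (assignedCouples C M' h).card := by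
  have := hM'.card_assignedCouples_add
  by_cases hle : (assignedCouples C M' false).card ≤ (assignedCouples C M' true).card
  · exact ⟨true, by omega⟩
  · exact ⟨false, by omega⟩

end DeterministicAssignment

section CoupleMembers

variable {I : Type*} [DecidableEq I]

def coupleMembers (F : Finset (I × I)) : Finset I :=
  F.biUnion fun c => {c.1, c.2}

theorem coupleMembers_mono : Monotone (coupleMembers (I := I)) :=
  fun _ _ hFC => Finset.biUnion_subset_biUnion_of_subset_left _ hFC

theorem card_coupleMembers {C F : Finset (I × I)} (hne : ∀ c ∈ C, c.1 ≠ c.2)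
    (hdisj : ∀ c ∈ C, ∀ c' ∈ C, c ≠ c' →
      c.1 ≠ c'.1 ∧ c.1 ≠ c'.2 ∧ c.2 ≠ c'.1 ∧ c.2 ≠ c'.2) (hFC : F ⊆ C) :
    (coupleMembers F).card = 2 * F.card := by
  rw [coupleMembers, Finset.card_biUnion]
  · rw [Finset.sum_congr rfl fun c hc => Finset.card_pair (hne c (hFC hc))]
    simp [mul_comm]
  · intro c hc c' hc' hcc'
    obtain ⟨h11, h12, h21, h22⟩ := hdisj c (hFC hc) c' (hFC hc') hcc'
    simp [h11.symm, h12.symm, h21.symm, h22.symm]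

theorem mem_coupleMembers_assignedCouples {H : Type*}
    {C : Finset (I × I)} {M' : I → H → ℝ} {h : H} {i : I}
    (hi : i ∈ coupleMembers (assignedCouples C M' h)) : M' i h = 1 := by
  obtain ⟨c, hc, hic⟩ := Finset.mem_biUnion.mp hi
  obtain ⟨-, h1, h2⟩ := Finset.mem_filter.mp hc
  rcases Finset.mem_insert.mp hic with rfl | hic
  · exact h1
  · rwa [Finset.mem_singleton.mp hic]

end CoupleMembers

namespace ExIntern

variable {q : ℕ}

def equivSum (q : ℕ) : ExIntern q ≃
    Fin (q / 2 + 1) ⊕ Fin (q / 2 + 1) ⊕ Bool ⊕ (Fin (q / 4 - 1) × Bool) ⊕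
      (Fin (q / 4 - 1) × Bool) where
  toFun
    | .s j => .inl j
    | .s' j => .inr (.inl j)
    | .cstar b => .inr (.inr (.inl b))
    | .c j b => .inr (.inr (.inr (.inl (j, b))))
    | .c' j b => .inr (.inr (.inr (.inr (j, b))))
  invFun
    | .inl j => .s j
    | .inr (.inl j) => .s' j
    | .inr (.inr (.inl b)) => .cstar b
    | .inr (.inr (.inr (.inl (j, b)))) => .c j b
    | .inr (.inr (.inr (.inr (j, b)))) => .c' j b
  left_inv i := by cases i <;> rfl
  right_inv := by rintro (j | j | b | ⟨j, b⟩ | ⟨j, b⟩) <;> rfl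

def single (b : Bool) (j : Fin (q / 2 + 1)) : ExIntern q :=
  if b then .s j else .s' j

theorem single_injective (b : Bool) : Function.Injective (single (q := q) b) := by
  cases b <;> intro j j' h <;> simpa [single] using h

theorem single_mem_exS (b : Bool) (j : Fin (q / 2 + 1)) : single b j ∈ exS q := by
  cases b <;> simp [single, exS]

theorem exM_single (b : Bool) (j : Fin (q / 2 + 1)) : exM q (single b j) b = 1 := by
  cases b <;> simp [single, exM]

theorem single_not_mem_coupleMembers (b : Bool) (j : Fin (q / 2 + 1)) :
    single b j ∉ coupleMembers (exC q) := by
  cases b <;> simp [single, coupleMembers, exC] <;>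
    rintro _ _ (⟨_, rfl, rfl⟩ | ⟨_, rfl, rfl⟩) <;> simp

end ExIntern

open ExIntern

theorem sum_exM (q : ℕ) (b : Bool) :
    ∑ i, exM q i b = ((q / 2 + 1 + 1 + 2 * (q / 4 - 1) : ℕ) : ℝ) := by
  rw [← (equivSum q).symm.sum_comp]
  cases b <;>
    simp [Fintype.sum_sum_type, equivSum, exM] <;> ring

theorem card_exC (q : ℕ) : (exC q).card = 1 + 2 * (q / 4 - 1) := by
  rw [exC, Finset.card_union_of_disjoint, Finset.card_union_of_disjoint, Finset.card_singleton,
    Finset.card_image_of_injective, Finset.card_image_of_injective]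
  · simp [two_mul, add_assoc]
  all_goals simp [Function.Injective, Finset.disjoint_left]

theorem exC_fst_ne_snd {q : ℕ} : ∀ c ∈ exC q, c.1 ≠ c.2 := by
  simp only [exC, Finset.mem_union, Finset.mem_singleton, Finset.mem_image, Finset.mem_univ,
    true_and]
  rintro c ((rfl | ⟨j, rfl⟩) | ⟨j, rfl⟩) <;> simp

theorem exC_pairwise_disjoint {q : ℕ} : ∀ c ∈ exC q, ∀ c' ∈ exC q, c ≠ c' →
    c.1 ≠ c'.1 ∧ c.1 ≠ c'.2 ∧ c.2 ≠ c'.1 ∧ c.2 ≠ c'.2 := by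
  simp only [exC, Finset.mem_union, Finset.mem_singleton, Finset.mem_image, Finset.mem_univ,
    true_and]
  rintro c ((rfl | ⟨j, rfl⟩) | ⟨j, rfl⟩) c' ((rfl | ⟨j', rfl⟩) | ⟨j', rfl⟩) hne <;> simp_all

theorem two_mul_card_assignedCouples_le {q : ℕ} {M' : ExIntern q → Bool → ℝ}
    (hM' : IsDeterministicAssignment (exC q) (exM q) M') {b : Bool}
    (hsingles : ∀ j, M' (single b j) b = 1) :
    2 * (assignedCouples (exC q) M' b).card ≤ 1 + 2 * (q / 4 - 1) := by
  set members := coupleMembers (assignedCouples (exC q) M' b)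
  have hdisj : Disjoint (Finset.univ.image (single b)) members := by
    simp only [Finset.disjoint_left, Finset.mem_image, Finset.mem_univ, true_and,
      forall_exists_index, forall_apply_eq_imp_iff]
    exact fun j hj => single_not_mem_coupleMembers b j
      (coupleMembers_mono (assignedCouples_subset _ _) hj)
  have hcapacity := hM'.card_le_capacity (T := Finset.univ.image (single b) ∪ members)
    fun i hi => (Finset.mem_union.mp hi).elim
      (fun hi => by obtain ⟨j, -, rfl⟩ := Finset.mem_image.mp hi; exact hsingles j)
      mem_coupleMembers_assignedCouples
  rw [Finset.card_union_of_disjoint hdisj, Finset.card_image_of_injective _ (single_injective b),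
    card_coupleMembers exC_fst_ne_snd exC_pairwise_disjoint (assignedCouples_subset _ _),
    sum_exM, Nat.cast_le, Finset.card_univ, Fintype.card_fin] at hcapacity
  omega

theorem lower_bound_example_deterministic (q : ℕ)
    (M' : ExIntern q → Bool → ℝ)
    (hM' : IsDeterministicAssignment (exC q) (exM q) M') :
    ∃ hstar : Bool,
      q / 4 ≤ ((exC q).filter fun c => M' c.1 hstar = 1 ∧ M' c.2 hstar = 1).card ∧
      ∃ i ∈ exS q, exM q i hstar = 1 ∧ M' i hstar = 0 := by
  obtain ⟨hstar, hmajority⟩ := hM'.exists_card_le_two_mul_card_assignedCouples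
  have hcard := card_exC q
  refine ⟨hstar, show q / 4 ≤ (assignedCouples (exC q) M' hstar).card by omega, ?_⟩
  by_contra! hno
  have := two_mul_card_assignedCouples_le hM' fun j =>
    (hM'.1 _ _).resolve_left (hno _ (single_mem_exS _ j) (exM_single _ j))
  omega
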